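/- Let 𝔸 be a strict monoidal category. Inserting a morphism into each gap of a 2-comb yields a well-defined operation: given a 2-comb represented by (f₁ : X → M₁ ⊗ A₁, f₂ : M₁ ⊗ B₁ → M₂ ⊗ A₂, f₃ : M₂ ⊗ B₂ → Y) and morphisms g₁ : A₁ → B₁, g₂ : A₂ → B₂ of 𝔸, the composite f₁ ; (1_{M₁} ⊗ g₁) ; f₂ ; (1_{M₂} ⊗ g₂) ; f₃ : X → Y depends only on the equivalence class of the comb (not on the chosen representative). -/
import Mathlib

open CategoryTheory MonoidalCategory
universe v u
variable (C : Type u) [Category.{v} C] [MonoidalCategory C]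

structure OpticRep (A B X Y : C) where
  M : C
  fwd : A ⟶ M ⊗ X
  bwd : M ⊗ Y ⟶ B

variable {C}

inductive OpticRel (A B X Y : C) : OpticRep C A B X Y → OpticRep C A B X Y → Prop
  | slide {M N : C} (f : M ⟶ N) (a : A ⟶ M ⊗ X) (b : N ⊗ Y ⟶ B) :
      OpticRel A B X Y ⟨N, a ≫ (f ▷ X), b⟩ ⟨M, a, (f ▷ Y) ≫ b⟩

def Optic (A B X Y : C) := Quot (OpticRel A B X Y)

def OpticRep.comp {A B X Y E F : C} (h : OpticRep C A B X Y) (k : OpticRep C X Y E F) :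
    OpticRep C A B E F where
  M := h.M ⊗ k.M
  fwd := h.fwd ≫ (h.M ◁ k.fwd) ≫ (α_ h.M k.M E).inv
  bwd := (α_ h.M k.M F).hom ≫ (h.M ◁ k.bwd) ≫ h.bwd

def OpticRep.id (A B : C) : OpticRep C A B A B :=
  ⟨𝟙_ C, (λ_ A).inv, (λ_ B).hom⟩

/-- The counit optic `ε_A : (A,A) → (I,I)` with residual `A`. -/
def epsRep (A : C) : OpticRep C A A (𝟙_ C) (𝟙_ C) :=
  ⟨A, (ρ_ A).inv, (ρ_ A).hom⟩

variable (C) in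
/-- A representative of a 2-comb with outer boundary `X`/`Y` and teeth `(A₁,B₁)`, `(A₂,B₂)`. -/
structure Comb2Rep (X A₁ B₁ A₂ B₂ Y : C) where
  M₁ : C
  M₂ : C
  f₁ : X ⟶ M₁ ⊗ A₁
  f₂ : M₁ ⊗ B₁ ⟶ M₂ ⊗ A₂
  f₃ : M₂ ⊗ B₂ ⟶ Y

/-- Sliding relations for 2-combs. -/
inductive Comb2Rel (X A₁ B₁ A₂ B₂ Y : C) :
    Comb2Rep C X A₁ B₁ A₂ B₂ Y → Comb2Rep C X A₁ B₁ A₂ B₂ Y → Prop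
  | slide₁ {M₁ M₁' M₂ : C} (m : M₁ ⟶ M₁') (f₁ : X ⟶ M₁ ⊗ A₁) (f₂ : M₁' ⊗ B₁ ⟶ M₂ ⊗ A₂)
      (f₃ : M₂ ⊗ B₂ ⟶ Y) :
      Comb2Rel X A₁ B₁ A₂ B₂ Y ⟨M₁', M₂, f₁ ≫ (m ▷ A₁), f₂, f₃⟩
        ⟨M₁, M₂, f₁, (m ▷ B₁) ≫ f₂, f₃⟩
  | slide₂ {M₁ M₂ M₂' : C} (m : M₂ ⟶ M₂') (f₁ : X ⟶ M₁ ⊗ A₁) (f₂ : M₁ ⊗ B₁ ⟶ M₂ ⊗ A₂)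
      (f₃ : M₂' ⊗ B₂ ⟶ Y) :
      Comb2Rel X A₁ B₁ A₂ B₂ Y ⟨M₁, M₂', f₁, f₂ ≫ (m ▷ A₂), f₃⟩
        ⟨M₁, M₂, f₁, f₂, (m ▷ B₂) ≫ f₃⟩

def Comb2 (X A₁ B₁ A₂ B₂ Y : C) := Quot (Comb2Rel X A₁ B₁ A₂ B₂ Y)

/-- The comultiplication 2-comb `Δ_A : (A,A) → (A,A);(A,A)` given by identities. -/
def deltaComb (A : C) : Comb2Rep C A A A A A A :=
  ⟨𝟙_ C, 𝟙_ C, (λ_ A).inv, (λ_ A).hom ≫ (λ_ A).inv, (λ_ A).hom⟩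

/-- Fill the first tooth of a 2-comb with an optic. -/
def Comb2Rep.fill₁ {X A₁ B₁ A₂ B₂ Y P Q : C} (c : Comb2Rep C X A₁ B₁ A₂ B₂ Y)
    (e : OpticRep C A₁ B₁ P Q) : Comb2Rep C X P Q A₂ B₂ Y where
  M₁ := c.M₁ ⊗ e.M
  M₂ := c.M₂
  f₁ := c.f₁ ≫ (c.M₁ ◁ e.fwd) ≫ (α_ c.M₁ e.M P).inv
  f₂ := (α_ c.M₁ e.M Q).hom ≫ (c.M₁ ◁ e.bwd) ≫ c.f₂
  f₃ := c.f₃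

/-- Fill the second tooth of a 2-comb with an optic. -/
def Comb2Rep.fill₂ {X A₁ B₁ A₂ B₂ Y P Q : C} (c : Comb2Rep C X A₁ B₁ A₂ B₂ Y)
    (e : OpticRep C A₂ B₂ P Q) : Comb2Rep C X A₁ B₁ P Q Y where
  M₁ := c.M₁
  M₂ := c.M₂ ⊗ e.M
  f₁ := c.f₁
  f₂ := c.f₂ ≫ (c.M₂ ◁ e.fwd) ≫ (α_ c.M₂ e.M P).inv
  f₃ := (α_ c.M₂ e.M Q).hom ≫ (c.M₂ ◁ e.bwd) ≫ c.f₃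

/-- Close off a trivial first tooth `(I,I)`, yielding an optic. -/
def Comb2Rep.close₁ {X A₂ B₂ Y : C} (c : Comb2Rep C X (𝟙_ C) (𝟙_ C) A₂ B₂ Y) :
    OpticRep C X Y A₂ B₂ :=
  ⟨c.M₂, c.f₁ ≫ c.f₂, c.f₃⟩

/-- Close off a trivial second tooth `(I,I)`, yielding an optic. -/
def Comb2Rep.close₂ {X A₁ B₁ Y : C} (c : Comb2Rep C X A₁ B₁ (𝟙_ C) (𝟙_ C) Y) :
    OpticRep C X Y A₁ B₁ :=
  ⟨c.M₁, c.f₁, c.f₂ ≫ c.f₃⟩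

/-- Precompose a 2-comb with an optic on the outer boundary. -/
def opticThenComb {X Y X' Y' A₁ B₁ A₂ B₂ : C} (h : OpticRep C X Y X' Y')
    (c : Comb2Rep C X' A₁ B₁ A₂ B₂ Y') : Comb2Rep C X A₁ B₁ A₂ B₂ Y where
  M₁ := h.M ⊗ c.M₁
  M₂ := h.M ⊗ c.M₂
  f₁ := h.fwd ≫ (h.M ◁ c.f₁) ≫ (α_ h.M c.M₁ A₁).inv
  f₂ := (α_ h.M c.M₁ B₁).hom ≫ (h.M ◁ c.f₂) ≫ (α_ h.M c.M₂ A₂).inv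
  f₃ := (α_ h.M c.M₂ B₂).hom ≫ (h.M ◁ c.f₃) ≫ h.bwd

/-- Inserting morphisms `g₁ : A₁ ⟶ B₁`, `g₂ : A₂ ⟶ B₂` into the gaps of a 2-comb. -/
def Comb2Rep.insert {X A₁ B₁ A₂ B₂ Y : C} (c : Comb2Rep C X A₁ B₁ A₂ B₂ Y)
    (g₁ : A₁ ⟶ B₁) (g₂ : A₂ ⟶ B₂) : X ⟶ Y :=
  c.f₁ ≫ (c.M₁ ◁ g₁) ≫ c.f₂ ≫ (c.M₂ ◁ g₂) ≫ c.f₃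

/-- Inserting morphisms into the gaps of a 2-comb depends only on the equivalence
class of the comb. -/
theorem comb2_insert_well_defined {X A₁ B₁ A₂ B₂ Y : C}
    (c c' : Comb2Rep C X A₁ B₁ A₂ B₂ Y)
    (h : Quot.mk (Comb2Rel X A₁ B₁ A₂ B₂ Y) c = Quot.mk (Comb2Rel X A₁ B₁ A₂ B₂ Y) c')
    (g₁ : A₁ ⟶ B₁) (g₂ : A₂ ⟶ B₂) :
    c.insert g₁ g₂ = c'.insert g₁ g₂ := by
  have key : ∀ a b, Comb2Rel X A₁ B₁ A₂ B₂ Y a b → a.insert g₁ g₂ = b.insert g₁ g₂ := by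
    rintro a b (⟨m, f₁, f₂, f₃⟩ | ⟨m, f₁, f₂, f₃⟩) <;>
      simp only [Comb2Rep.insert, Category.assoc, ← whisker_exchange_assoc]
  exact congrArg (Quot.lift (fun c => c.insert g₁ g₂) key) h
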